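/- arXiv:1706.09393 — 6 statements merged into one kernel-verified Lean document; each statement's English description precedes it below -/
import Mathlib

section
/- If a default theory ⟨W, D⟩ has an inconsistent stable extension E (i.e., ⊥ ∈ E), then W is inconsistent (unsatisfiable). -/
inductive PF (V : Type) : Type
  | var : V → PF V
  | top : PF V
  | bot : PF V
  | neg : PF V → PF V
  | conj : PF V → PF V → PF V
  | disj : PF V → PF V → PF V

namespace PF
variable {V : Type}
def eval (θ : V → Bool) : PF V → Bool
  | var a => θ a
  | top => true
  | bot => false
  | neg f => !(eval θ f)
  | conj f g => eval θ f && eval θ g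
  | disj f g => eval θ f || eval θ g
end PF

/-- A set of formulas is satisfiable if one assignment satisfies all of them. -/
def SatSet {V : Type} (S : Set (PF V)) : Prop := ∃ θ : V → Bool, ∀ f ∈ S, f.eval θ = true

/-- Semantic consequence of a set of formulas. -/
def Entails {V : Type} (S : Set (PF V)) (g : PF V) : Prop :=
  ∀ θ : V → Bool, (∀ f ∈ S, f.eval θ = true) → g.eval θ = true

/-- Deductive closure. -/
def Th {V : Type} (S : Set (PF V)) : Set (PF V) := {g | Entails S g}

/-- A default rule (prerequisite, justification, conclusion). -/
structure DRule (V : Type) where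
  pre : PF V
  jus : PF V
  con : PF V

/-- The defining conditions of Reiter's Γ operator: G contains W, is deductively
closed, and is closed under defaults applicable w.r.t. E. -/
def GammaPred {V : Type} (W : Set (PF V)) (D : Set (DRule V)) (E G : Set (PF V)) : Prop :=
  W ⊆ G ∧ Th G ⊆ G ∧ ∀ d ∈ D, d.pre ∈ G → d.jus.neg ∉ E → d.con ∈ G

/-- Γ(E): the smallest set satisfying the conditions above. -/
def Gamma {V : Type} (W : Set (PF V)) (D : Set (DRule V)) (E : Set (PF V)) : Set (PF V) :=
  ⋂₀ {G | GammaPred W D E G}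

/-- E is a stable extension of ⟨W, D⟩ iff E = Γ(E). -/
def StableExt {V : Type} (W : Set (PF V)) (D : Set (DRule V)) (E : Set (PF V)) : Prop :=
  E = Gamma W D E

/-- E(S): conclusions of the defaults in S. -/
def concls {V : Type} (S : Set (DRule V)) : Set (PF V) := DRule.con '' S

/-- d is α-satisfiable in S. -/
def ASat {V : Type} (S : Set (DRule V)) (d : DRule V) : Prop :=
  SatSet (concls S ∪ {d.pre.neg})

/-- d is β-satisfiable in S. -/
def BSat {V : Type} (S : Set (DRule V)) (d : DRule V) : Prop :=
  ¬ SatSet (concls S ∪ {d.jus})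

/-- d is γ-satisfiable in S. -/
def GSat {V : Type} (S : Set (DRule V)) (d : DRule V) : Prop := d ∈ S

/-- S is a satisfying default set of D. -/
def SatisfyingSet {V : Type} (D S : Set (DRule V)) : Prop :=
  S ⊆ D ∧ ∀ d ∈ D, ASat S d ∨ BSat S d ∨ GSat S d

/-- S is a stable default set of D. -/
def StableSet {V : Type} (D S : Set (DRule V)) : Prop :=
  SatisfyingSet D S ∧
    ¬ ∃ S', S' ⊂ S ∧ ∀ d ∈ D, ASat S' d ∨ BSat S d ∨ GSat S' d

/-- If ⟨W, D⟩ has an inconsistent stable extension, then W is unsatisfiable. -/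
theorem inconsistent_extension_implies_W_inconsistent {V : Type}
    (W : Set (PF V)) (D : Set (DRule V)) (E : Set (PF V))
    (hE : StableExt W D E) (hbot : PF.bot ∈ E) : ¬ SatSet W := by
  rintro ⟨θ, hθ⟩
  -- Since bot ∈ E and E = Γ(E) is deductively closed, every formula is in E.
  have hEclosed : Th E ⊆ E := by
    intro g hg
    rw [hE]
    intro G hG
    have hgG : g ∈ Th G := by
      intro τ hτ
      apply hg
      intro f hf
      exact hτ f ((le_of_eq hE hf : f ∈ Gamma W D E) G hG)
    exact hG.2.1 hgG
  have hall : ∀ g : PF V, g ∈ E := by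
    intro g
    apply hEclosed
    intro τ hτ
    have := hτ PF.bot hbot
    simp [PF.eval] at this
  -- Th W satisfies GammaPred, since no default is applicable.
  have hG : GammaPred W D E (Th W) := by
    refine ⟨?_, ?_, ?_⟩
    · intro f hf τ hτ; exact hτ f hf
    · intro g hg τ hτ
      exact hg τ (fun f hf => hf τ hτ)
    · intro d _ _ hjus
      exact absurd (hall d.jus.neg) hjus
  have hbotW : PF.bot ∈ Th W :=
    (le_of_eq hE hbot : PF.bot ∈ Gamma W D E) (Th W) hG
  have := hbotW θ hθ
  simp [PF.eval] at this
end

section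
/- For a default theory D (with empty knowledge base), the set of consistent stable extensions of D equals the union over all stable default sets S of D of the deductive closures Th({γ(d) | d ∈ S}); moreover, each stable default set S is a set of generating defaults of the extension Th({γ(d) | d ∈ S}). -/
/-!
The defaults that Reiter's Γ operator fires with respect to `E` are the least fixed point `T_E` of
the monotone operator `S ↦ {d ∈ D | α(d) ∈ Th(E(S)), ¬β(d) ∉ E}`, and Γ(E) = Th(E(T_E)).
Read through `Th`, the condition "α-, β- or γ-satisfiable" on `S'` relative to `S` says exactly
that `S'` is a pre-fixed point of this operator for `E = Th(E(S))`. Hence `S` is a stable default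
set iff `S = T_{Th(E(S))}`, which is the extension equation for `Th(E(S))` read on defaults.
-/

variable {V : Type}

lemma subset_Th (X : Set (PF V)) : X ⊆ Th X := fun f hf _ hθ => hθ f hf

lemma Th_mono {X Y : Set (PF V)} (h : X ⊆ Y) : Th X ⊆ Th Y :=
  fun _ hg θ hθ => hg θ fun f hf => hθ f (h hf)

lemma Th_Th_subset (X : Set (PF V)) : Th (Th X) ⊆ Th X :=
  fun _ hg θ hθ => hg θ fun _ hf => hf θ hθ

lemma mem_Th_of_bot_mem_Th {X : Set (PF V)} (h : PF.bot ∈ Th X) (f : PF V) : f ∈ Th X :=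
  fun θ hθ => by simpa [PF.eval] using h θ hθ

lemma bot_notMem_Th_empty : PF.bot ∉ Th (∅ : Set (PF V)) :=
  fun h => by simpa [PF.eval] using h (fun _ => true) (by simp)

lemma aSat_iff {S : Set (DRule V)} {d : DRule V} : ASat S d ↔ d.pre ∉ Th (concls S) := by
  constructor
  · rintro ⟨θ, hθ⟩ hpre
    have hneg := hθ d.pre.neg (Or.inr rfl)
    simp [PF.eval, hpre θ fun f hf => hθ f (Or.inl hf)] at hneg
  · intro hpre
    obtain ⟨θ, hθ, hfalse⟩ : ∃ θ, (∀ f ∈ concls S, f.eval θ = true) ∧ d.pre.eval θ ≠ true := by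
      simpa [Th, Entails] using hpre
    refine ⟨θ, ?_⟩
    rintro f (hf | rfl)
    · exact hθ f hf
    · simpa [PF.eval] using hfalse

lemma bSat_iff {S : Set (DRule V)} {d : DRule V} : BSat S d ↔ d.jus.neg ∈ Th (concls S) := by
  constructor
  · intro hunsat θ hθ
    by_contra hjus
    refine hunsat ⟨θ, ?_⟩
    rintro f (hf | rfl)
    · exact hθ f hf
    · simpa [PF.eval] using hjus
  · rintro hneg ⟨θ, hθ⟩
    have hjus := hθ d.jus (Or.inr rfl)
    simpa [PF.eval, hjus] using hneg θ fun f hf => hθ f (Or.inl hf)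

lemma concls_mono {S S' : Set (DRule V)} (h : S ⊆ S') : concls S ⊆ concls S' :=
  Set.image_mono h

def applicableDefaults (D : Set (DRule V)) (E : Set (PF V)) : Set (DRule V) →o Set (DRule V) where
  toFun S := {d | d ∈ D ∧ d.pre ∈ Th (concls S) ∧ d.jus.neg ∉ E}
  monotone' _ _ h _ hd := ⟨hd.1, Th_mono (concls_mono h) hd.2.1, hd.2.2⟩

lemma mem_applicableDefaults {D S : Set (DRule V)} {E : Set (PF V)} {d : DRule V} :
    d ∈ applicableDefaults D E S ↔ d ∈ D ∧ d.pre ∈ Th (concls S) ∧ d.jus.neg ∉ E :=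
  Iff.rfl

lemma applicableDefaults_subset (D : Set (DRule V)) (E : Set (PF V)) (S : Set (DRule V)) :
    applicableDefaults D E S ⊆ D :=
  fun _ hd => hd.1

lemma applicableDefaults_le_iff {D S S' : Set (DRule V)} :
    applicableDefaults D (Th (concls S)) S' ≤ S' ↔ ∀ d ∈ D, ASat S' d ∨ BSat S d ∨ GSat S' d := by
  refine forall_congr' fun d => ?_
  simp only [mem_applicableDefaults, aSat_iff, bSat_iff, GSat]
  tauto

lemma gamma_empty_eq_Th_lfp (D : Set (DRule V)) (E : Set (PF V)) :
    Gamma ∅ D E = Th (concls (applicableDefaults D E).lfp) := by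
  set T := (applicableDefaults D E).lfp
  apply subset_antisymm
  · refine Set.sInter_subset_of_mem ⟨Set.empty_subset _, Th_Th_subset _, ?_⟩
    intro d hd hpre hjus
    have hdT : d ∈ applicableDefaults D E T := ⟨hd, hpre, hjus⟩
    exact subset_Th _ ⟨d, (applicableDefaults D E).map_lfp.le hdT, rfl⟩
  · rintro f hf G ⟨-, hG_closed, hG_rules⟩
    -- The defaults whose conclusions already lie in `G` form a pre-fixed point.
    have hT : T ⊆ {d | d.con ∈ G} := by
      refine (applicableDefaults D E).lfp_le ?_
      rintro d ⟨hd, hpre, hjus⟩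
      refine hG_rules d hd (hG_closed (Th_mono ?_ hpre)) hjus
      rintro _ ⟨d', hd', rfl⟩
      exact hd'
    refine hG_closed (Th_mono ?_ hf)
    rintro _ ⟨d, hd, rfl⟩
    exact hT hd

lemma stableExt_empty_iff {D : Set (DRule V)} {E : Set (PF V)} :
    StableExt ∅ D E ↔ E = Th (concls (applicableDefaults D E).lfp) := by
  rw [StableExt, gamma_empty_eq_Th_lfp]

lemma stableSet_iff_eq_lfp {D S : Set (DRule V)} :
    StableSet D S ↔ S = (applicableDefaults D (Th (concls S))).lfp := by
  set F := applicableDefaults D (Th (concls S))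
  constructor
  · rintro ⟨⟨-, hS⟩, hmin⟩
    have hTS : F.lfp ≤ S := F.lfp_le (applicableDefaults_le_iff.2 hS)
    by_contra hne
    exact hmin ⟨F.lfp, lt_of_le_of_ne hTS (Ne.symm hne), applicableDefaults_le_iff.1 F.map_lfp.le⟩
  · intro hS
    have hfix : F S = S := hS ▸ F.map_lfp
    refine ⟨⟨hfix ▸ applicableDefaults_subset _ _ _, applicableDefaults_le_iff.1 hfix.le⟩, ?_⟩
    rintro ⟨S', hS'S, hS'⟩
    exact hS'S.not_ge (hS ▸ F.lfp_le (applicableDefaults_le_iff.2 hS'))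

lemma applicableDefaults_eq_of_stableSet {D S : Set (DRule V)} (hS : StableSet D S) :
    applicableDefaults D (Th (concls S)) S = S := by
  conv_rhs => rw [stableSet_iff_eq_lfp.1 hS]
  rw [← OrderHom.map_lfp, ← stableSet_iff_eq_lfp.1 hS]

lemma bot_notMem_Th_concls_of_stableSet {D S : Set (DRule V)} (hS : StableSet D S) :
    PF.bot ∉ Th (concls S) := by
  intro hbot
  -- An inconsistent `Th (E(S))` blocks every default, so the least fixed point is empty.
  have hempty : S = ∅ := by
    rw [stableSet_iff_eq_lfp.1 hS, ← Set.bot_eq_empty, eq_bot_iff]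
    exact OrderHom.lfp_le _ fun d hd => hd.2.2 (mem_Th_of_bot_mem_Th hbot _)
  simp only [hempty, concls, Set.image_empty] at hbot
  exact bot_notMem_Th_empty hbot

theorem stable_extensions_eq_closures_of_stable_default_sets_general {V : Type}
    (D : Set (DRule V)) :
    ({E | StableExt (∅ : Set (PF V)) D E ∧ PF.bot ∉ E} =
      ⋃ S ∈ {S | StableSet D S}, {Th (concls S)}) ∧
    (∀ S, StableSet D S →
      S = {d | d ∈ D ∧ d.pre ∈ Th (concls S) ∧ d.jus.neg ∉ Th (concls S)}) := by
  refine ⟨?_, fun S hS => (applicableDefaults_eq_of_stableSet hS).symm⟩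
  ext E
  simp only [Set.mem_ofPred_eq, Set.mem_iUnion, Set.mem_singleton_iff, exists_prop]
  constructor
  · rintro ⟨hE, -⟩
    have hE_eq := stableExt_empty_iff.1 hE
    refine ⟨_, stableSet_iff_eq_lfp.2 ?_, hE_eq⟩
    rw [← hE_eq]
  · rintro ⟨S, hS, rfl⟩
    refine ⟨stableExt_empty_iff.2 ?_, bot_notMem_Th_concls_of_stableSet hS⟩
    rw [← stableSet_iff_eq_lfp.1 hS]

/-- The consistent stable extensions of D (empty knowledge base) are exactly the
deductive closures Th(E(S)) for the stable default sets S of D; moreover each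
stable default set S is the set of generating defaults of its extension. -/
theorem stable_extensions_eq_closures_of_stable_default_sets {V : Type}
    (D : Set (DRule V)) (hD : D.Finite) :
    ({E | StableExt (∅ : Set (PF V)) D E ∧ PF.bot ∉ E} =
      ⋃ S ∈ {S | StableSet D S}, {Th (concls S)}) ∧
    (∀ S, StableSet D S →
      S = {d | d ∈ D ∧ d.pre ∈ Th (concls S) ∧ d.jus.neg ∉ Th (concls S)}) :=
  stable_extensions_eq_closures_of_stable_default_sets_general D
end

section
/- If S is a stable default set of a default theory D and Th(E(S)) is consistent, then Th(E(S)) is a stable extension of D. -/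
/-- If S is a stable default set of D and Th(E(S)) is consistent, then Th(E(S))
is a stable extension of D (empty knowledge base). -/
theorem stable_default_set_gives_stable_extension {V : Type}
    (D : Set (DRule V)) (hD : D.Finite) (S : Set (DRule V))
    (hS : StableSet D S) (hcons : PF.bot ∉ Th (concls S)) :
    StableExt (∅ : Set (PF V)) D (Th (concls S)) := by

  classical
  set E := Th (concls S) with hEdef
  -- BSat from entailed negated justification
  have hBofNeg : ∀ d : DRule V, d.jus.neg ∈ E → BSat S d := by
    intro d hmem ⟨θ, hθ⟩
    have hs : ∀ f ∈ concls S, f.eval θ = true := fun f hf => hθ f (Or.inl hf)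
    have hn : (PF.neg d.jus).eval θ = true := hmem θ hs
    have hj : d.jus.eval θ = true := hθ _ (Or.inr rfl)
    simp [PF.eval, hj] at hn
  -- E satisfies GammaPred
  have hpred : GammaPred ∅ D E E := by
    refine ⟨Set.empty_subset _, ?_, ?_⟩
    · intro g hg θ hθ
      exact hg θ (fun f hf => hf θ hθ)
    · intro d hd hpre hjus
      rcases hS.1.2 d hd with h | h | h
      · exfalso
        obtain ⟨θ, hθ⟩ := h
        have hs : ∀ f ∈ concls S, f.eval θ = true := fun f hf => hθ f (Or.inl hf)
        have hn : (PF.neg d.pre).eval θ = true := hθ _ (Or.inr rfl)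
        have hp := hpre θ hs
        simp [PF.eval, hp] at hn
      · exfalso
        apply hjus
        intro θ hθ
        by_contra hne
        have hj : d.jus.eval θ = true := by
          simp [PF.eval] at hne; simpa using hne
        exact h ⟨θ, fun f hf => hf.elim (hθ f) (fun he => by rw [he]; exact hj)⟩
      · exact fun θ hθ => hθ _ ⟨d, h, rfl⟩
  -- every GammaPred-set contains concls S
  have hkey : ∀ G : Set (PF V), GammaPred ∅ D E G → concls S ⊆ G := by
    intro G hG
    by_contra hnc
    rcases Set.not_subset.1 hnc with ⟨c, hcS, hcG⟩
    obtain ⟨d0, hd0S, hd0c⟩ := hcS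
    set S' : Set (DRule V) := {d ∈ S | d.con ∈ G} with hS'def
    have hsub : S' ⊂ S := by
      constructor
      · intro d hd; exact hd.1
      · intro hle
        exact hcG (hd0c ▸ (hle hd0S).2)
    apply hS.2
    refine ⟨S', hsub, ?_⟩
    intro d hd
    have hconS' : concls S' ⊆ G := by
      rintro f ⟨d', hd', rfl⟩; exact hd'.2
    rcases hS.1.2 d hd with h | h | h
    · left
      obtain ⟨θ, hθ⟩ := h
      exact ⟨θ, fun f hf => hf.elim
        (fun hf' => hθ f (Or.inl ⟨hf'.choose, hf'.choose_spec.1.1, hf'.choose_spec.2⟩))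
        (fun hf' => hθ f (Or.inr hf'))⟩
    · exact Or.inr (Or.inl h)
    · by_cases hcon : d.con ∈ G
      · exact Or.inr (Or.inr ⟨h, hcon⟩)
      · by_cases hjus : d.jus.neg ∈ E
        · exact Or.inr (Or.inl (hBofNeg d hjus))
        · have hpre : d.pre ∉ G := fun hp => hcon (hG.2.2 d hd hp hjus)
          left
          have hnent : ¬ Entails G d.pre := fun he => hpre (hG.2.1 he)
          rcases not_forall.1 hnent with ⟨θ, hθ⟩
          rcases _root_.not_imp.1 hθ with ⟨hθG, hθp⟩
          refine ⟨θ, fun f hf => hf.elim (fun hf' => hθG f (hconS' hf')) ?_⟩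
          rintro rfl
          simp only [PF.eval]
          simp [Bool.not_eq_true] at hθp ⊢
          exact hθp
  apply Set.Subset.antisymm
  · intro g hg
    intro G hG
    have : Entails G g := fun θ hθ => hg θ (fun f hf => hθ f (hkey G hG hf))
    exact hG.2.1 this
  · exact Set.sInter_subset_of_mem hpred
end

section
/- If E is a consistent stable extension of a default theory D (with empty knowledge base), then the set of generating defaults G = {d ∈ D | α(d) ∈ E, ¬β(d) ∉ E} is a stable default set of D, and E = Th({γ(d) | d ∈ G}). -/
/-!
Since `E = Γ(E)` is the least deductively closed set closed under the defaults applicable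
w.r.t. `E`, it is enough to check that `Th(E(S))` has these closure properties to get
`E = Th(E(S))`, for any set `S` of generating defaults. For the full set `G` of generating
defaults this is immediate, and with `E = Th(E(G))` the three satisfiability conditions read
`α(d) ∉ E`, `¬β(d) ∈ E` and `d ∈ G`, so `G` is a satisfying set. If a proper subset `S'` of `G`
witnessed non-minimality, its conditions would make `Th(E(S'))` closed as well, so
`E = Th(E(S'))`, and then no default of `G \ S'` could satisfy any of them.
-/

section DefaultLogic

variable {V : Type}

lemma th_mono {S T : Set (PF V)} (h : S ⊆ T) : Th S ⊆ Th T :=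
  fun _ hg θ hθ => hg θ fun f hf => hθ f (h hf)

lemma subset_th (S : Set (PF V)) : S ⊆ Th S :=
  fun f hf _ hθ => hθ f hf

lemma th_th_subset (S : Set (PF V)) : Th (Th S) ⊆ Th S :=
  fun _ hg θ hθ => hg θ fun _ hf => hf θ hθ

lemma satSet_union_singleton_iff {T : Set (PF V)} {f : PF V} :
    SatSet (T ∪ {f}) ↔ f.neg ∉ Th T := by
  simp only [SatSet, Th, Entails, Set.mem_ofPred_eq, Set.mem_union, Set.mem_singleton_iff,
    not_forall, PF.eval, Bool.not_eq_eq_eq_not, Bool.not_true, Bool.not_eq_false, exists_prop]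
  constructor
  · rintro ⟨θ, hθ⟩
    exact ⟨θ, fun g hg => hθ g (Or.inl hg), hθ f (Or.inr rfl)⟩
  · rintro ⟨θ, hT, hf⟩
    exact ⟨θ, fun g => by rintro (hg | rfl); exacts [hT g hg, hf]⟩

lemma neg_neg_mem_th_iff {T : Set (PF V)} {f : PF V} : f.neg.neg ∈ Th T ↔ f ∈ Th T := by
  simp only [Th, Entails, Set.mem_ofPred_eq, PF.eval, Bool.not_not]

lemma gammaPred_gamma (W : Set (PF V)) (D : Set (DRule V)) (E : Set (PF V)) :
    GammaPred W D E (Gamma W D E) :=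
  ⟨fun _ hw _ hG => hG.1 hw,
    fun _ hg _ hG => hG.2.1 (th_mono (Set.sInter_subset_of_mem hG) hg),
    fun d hd hpre hjus _ hG => hG.2.2 d hd (hpre _ hG) hjus⟩

lemma gamma_subset {W : Set (PF V)} {D : Set (DRule V)} {E G : Set (PF V)}
    (hG : GammaPred W D E G) : Gamma W D E ⊆ G :=
  Set.sInter_subset_of_mem hG

def generatingDefaults (D : Set (DRule V)) (E : Set (PF V)) : Set (DRule V) :=
  {d | d ∈ D ∧ d.pre ∈ E ∧ d.jus.neg ∉ E}

lemma satisfyingSet_generatingDefaults {D : Set (DRule V)} {E : Set (PF V)}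
    (hE : E = Th (concls (generatingDefaults D E))) :
    SatisfyingSet D (generatingDefaults D E) := by
  refine ⟨fun d hd => hd.1, fun d hd => ?_⟩
  rw [aSat_iff, bSat_iff, GSat, ← hE]
  by_cases hpre : d.pre ∈ E
  · by_cases hjus : d.jus.neg ∈ E
    · exact Or.inr (Or.inl hjus)
    · exact Or.inr (Or.inr ⟨hd, hpre, hjus⟩)
  · exact Or.inl hpre

namespace StableExt

variable {W : Set (PF V)} {D : Set (DRule V)} {E : Set (PF V)}

lemma gammaPred (hE : StableExt W D E) : GammaPred W D E E := by
  have h := gammaPred_gamma W D E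
  rwa [← hE] at h

lemma th_concls_subset (hE : StableExt W D E) {S : Set (DRule V)}
    (hS : S ⊆ generatingDefaults D E) : Th (concls S) ⊆ E := by
  refine (th_mono ?_).trans hE.gammaPred.2.1
  rintro _ ⟨d, hd, rfl⟩
  obtain ⟨hdD, hpre, hjus⟩ := hS hd
  exact hE.gammaPred.2.2 d hdD hpre hjus

lemma eq_th_concls (hE : StableExt ∅ D E) {S : Set (DRule V)}
    (hS : S ⊆ generatingDefaults D E)
    (hclosed : ∀ d ∈ D, d.pre ∈ Th (concls S) → d.jus.neg ∉ E → d ∈ S) :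
    E = Th (concls S) := by
  refine (hE.th_concls_subset hS).antisymm' ?_
  have hgamma : GammaPred ∅ D E (Th (concls S)) :=
    ⟨Set.empty_subset _, th_th_subset _, fun d hd hpre hjus =>
      subset_th _ ⟨d, hclosed d hd hpre hjus, rfl⟩⟩
  exact hE.subset.trans (gamma_subset hgamma)

lemma eq_th_concls_generatingDefaults (hE : StableExt ∅ D E) :
    E = Th (concls (generatingDefaults D E)) :=
  hE.eq_th_concls subset_rfl fun _ hd hpre hjus =>
    ⟨hd, hE.th_concls_subset subset_rfl hpre, hjus⟩

lemma not_exists_ssubset_generatingDefaults (hE : StableExt ∅ D E) :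
    ¬ ∃ S', S' ⊂ generatingDefaults D E ∧
      ∀ d ∈ D, ASat S' d ∨ BSat (generatingDefaults D E) d ∨ GSat S' d := by
  rintro ⟨S', hS'G, hS'⟩
  have hmem : ∀ d ∈ D, d.pre ∈ Th (concls S') → d.jus.neg ∉ E → d ∈ S' := by
    intro d hd hpre hjus
    rw [hE.eq_th_concls_generatingDefaults] at hjus
    rcases hS' d hd with hA | hB | hG
    exacts [absurd hpre (aSat_iff.mp hA), absurd (bSat_iff.mp hB) hjus, hG]
  have hES' : E = Th (concls S') := hE.eq_th_concls hS'G.subset hmem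
  obtain ⟨d, ⟨hdD, hpre, hjus⟩, hdS'⟩ := Set.exists_of_ssubset hS'G
  exact hdS' (hmem d hdD (hES' ▸ hpre) hjus)

lemma stableSet_generatingDefaults (hE : StableExt ∅ D E) :
    StableSet D (generatingDefaults D E) :=
  ⟨satisfyingSet_generatingDefaults hE.eq_th_concls_generatingDefaults,
    hE.not_exists_ssubset_generatingDefaults⟩

end StableExt

end DefaultLogic

theorem generating_defaults_of_consistent_extension_general {V : Type}
    (D : Set (DRule V)) (E : Set (PF V))
    (hE : StableExt (∅ : Set (PF V)) D E) :
    StableSet D {d | d ∈ D ∧ d.pre ∈ E ∧ d.jus.neg ∉ E} ∧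
    E = Th (concls {d | d ∈ D ∧ d.pre ∈ E ∧ d.jus.neg ∉ E}) :=
  ⟨hE.stableSet_generatingDefaults, hE.eq_th_concls_generatingDefaults⟩

/-- If E is a consistent stable extension of D (empty knowledge base), then the
set of generating defaults G is a stable default set of D and E = Th(E(G)). -/
theorem generating_defaults_of_consistent_extension {V : Type}
    (D : Set (DRule V)) (E : Set (PF V))
    (hE : StableExt (∅ : Set (PF V)) D E) (hcons : PF.bot ∉ E) :
    StableSet D {d | d ∈ D ∧ d.pre ∈ E ∧ d.jus.neg ∉ E} ∧
    E = Th (concls {d | d ∈ D ∧ d.pre ∈ E ∧ d.jus.neg ∉ E}) :=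
  generating_defaults_of_consistent_extension_general D E hE
end

section
/- In the default theory D₁ = { d₁ = (⊤ : a)/(a ∨ b), d₂ = (⊤ : ¬a)/¬b }, no subset S ⊆ D₁ is a stable default set. -/
/-- In D₁ = { (⊤ : a)/(a ∨ b), (⊤ : ¬a)/¬b }, no subset is a stable default set. -/
theorem D1_no_stable_default_set
    (S : Set (DRule (Fin 2)))
    (hS : S ⊆ ({⟨PF.top, PF.var 0, PF.disj (PF.var 0) (PF.var 1)⟩,
                 ⟨PF.top, PF.neg (PF.var 0), PF.neg (PF.var 1)⟩} : Set (DRule (Fin 2)))) :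
    ¬ StableSet
        ({⟨PF.top, PF.var 0, PF.disj (PF.var 0) (PF.var 1)⟩,
          ⟨PF.top, PF.neg (PF.var 0), PF.neg (PF.var 1)⟩} : Set (DRule (Fin 2))) S := by
  
  rintro ⟨⟨hsub, hsat⟩, hmin⟩
  by_cases h1 : (⟨PF.top, PF.var 0, PF.disj (PF.var 0) (PF.var 1)⟩ : DRule (Fin 2)) ∈ S
  · by_cases h2 : (⟨PF.top, PF.neg (PF.var 0), PF.neg (PF.var 1)⟩ : DRule (Fin 2)) ∈ S
    · -- S = D: violates minimality with S' = {d1}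
      apply hmin
      refine ⟨{⟨PF.top, PF.var 0, PF.disj (PF.var 0) (PF.var 1)⟩}, ⟨?_, ?_⟩, ?_⟩
      · intro x hx; rw [Set.mem_singleton_iff] at hx; subst hx; exact h1
      · intro hss
        have := hss h2
        simp only [Set.mem_singleton_iff, DRule.mk.injEq] at this
        exact absurd this.2.1 (by intro h; cases h)
      · intro d hd
        rcases hd with hd | hd
        · subst hd; exact Or.inr (Or.inr rfl)
        · rw [Set.mem_singleton_iff] at hd; subst hd
          refine Or.inr (Or.inl ?_)
          rintro ⟨θ, hθ⟩
          have ha := hθ _ (Or.inl ⟨_, h1, rfl⟩)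
          have hb := hθ _ (Or.inl ⟨_, h2, rfl⟩)
          have hc := hθ _ (Or.inr rfl)
          simp [PF.eval] at ha hb hc
          simp [hb, hc] at ha
    · -- d2 ∉ S: d2 cannot be satisfied
      rcases hsat _ (Or.inr rfl) with hA | hB | hG
      · obtain ⟨θ, hθ⟩ := hA
        have := hθ _ (Or.inr rfl)
        simp [PF.eval] at this
      · apply hB
        refine ⟨fun i => if i = 0 then false else true, ?_⟩
        rintro f (⟨d, hdS, rfl⟩ | hf)
        · rcases hsub hdS with hd | hd
          · subst hd; simp [PF.eval]
          · rw [Set.mem_singleton_iff] at hd; subst hd; exact absurd hdS h2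
        · rw [Set.mem_singleton_iff] at hf; subst hf; simp [PF.eval]
      · exact h2 hG
  · -- d1 ∉ S: d1 cannot be satisfied
    rcases hsat _ (Or.inl rfl) with hA | hB | hG
    · obtain ⟨θ, hθ⟩ := hA
      have := hθ _ (Or.inr rfl)
      simp [PF.eval] at this
    · apply hB
      refine ⟨fun i => if i = 0 then true else false, ?_⟩
      rintro f (⟨d, hdS, rfl⟩ | hf)
      · rcases hsub hdS with hd | hd
        · subst hd; exact absurd hdS h1
        · rw [Set.mem_singleton_iff] at hd; subst hd; simp [PF.eval]
      · rw [Set.mem_singleton_iff] at hf; subst hf; simp [PF.eval]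
    · exact h1 hG
end

section
/- If W is a consistent set of formulas then every stable extension of the default theory ⟨W, D⟩ is consistent. -/
/-- If W is consistent, every stable extension of ⟨W, D⟩ is consistent. -/
theorem consistent_W_implies_consistent_extensions {V : Type}
    (W : Set (PF V)) (D : Set (DRule V)) (E : Set (PF V))
    (hW : SatSet W) (hE : StableExt W D E) : PF.bot ∉ E := by
  intro hbot
  -- E is deductively closed: Th E ⊆ E
  have hclosed : Th E ⊆ E := by
    intro g hg
    rw [hE]
    intro G hG
    exact hG.2.1 (fun θ hθ => hg θ (fun f hf => hθ f (by
      rw [hE] at hf; exact hf G hG)))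
  -- Since ⊥ ∈ E, E contains every formula
  have hall : ∀ g : PF V, g ∈ E := by
    intro g
    apply hclosed
    intro θ hθ
    have := hθ PF.bot hbot
    simp [PF.eval] at this
  -- Th W satisfies GammaPred, so Γ(E) ⊆ Th W
  have hTW : GammaPred W D E (Th W) := by
    refine ⟨fun f hf θ hθ => hθ f hf, ?_, ?_⟩
    · intro g hg θ hθ
      exact hg θ (fun f hf => hf θ hθ)
    · intro d _ _ hjus
      exact absurd (hall d.jus.neg) hjus
  have : PF.bot ∈ Th W := by
    rw [hE] at hbot
    exact hbot (Th W) hTW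
  obtain ⟨θ, hθ⟩ := hW
  have := this θ hθ
  simp [PF.eval] at this
end
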